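/- arXiv:2205.14816 — 2 statements merged into one kernel-verified Lean document; each statement's English description precedes it below -/
import Mathlib

section
/- For every symmetric norm l on ℝ^d, if x is drawn uniformly at random (Haar measure) from the unit sphere S^{d-1}, then Pr[|l(x) − M_l| > 2·b_l/√d] < 1/3, where M_l is the median of l on the sphere and b_l = max_{x ∈ S^{d-1}} l(x). -/
open MeasureTheory
open scoped ENNReal

def IsSymmetricNorm {d : ℕ} (l : (Fin d → ℝ) → ℝ) : Prop :=
  (∀ x y, l (x + y) ≤ l x + l y) ∧
  (∀ (c : ℝ) (x), l (c • x) = |c| * l x) ∧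
  (∀ x, x ≠ 0 → 0 < l x) ∧
  (∀ (σ : Equiv.Perm (Fin d)) (x), l (fun i => x (σ i)) = l x) ∧
  (∀ x, l (fun i => |x i|) = l x)

/-- the Euclidean (ℓ₂) norm on `Fin d → ℝ`. -/
noncomputable def enorm2 {d : ℕ} (x : Fin d → ℝ) : ℝ :=
  Real.sqrt (∑ i, x i ^ 2)

lemma enorm2_nonneg {d : ℕ} (x : Fin d → ℝ) : 0 ≤ enorm2 x := Real.sqrt_nonneg _

lemma enorm2_smul {d : ℕ} (c : ℝ) (x : Fin d → ℝ) :
    enorm2 (c • x) = |c| * enorm2 x := by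
  simp only [enorm2, Pi.smul_apply, smul_eq_mul, mul_pow, ← Finset.mul_sum]
  rw [Real.sqrt_mul (sq_nonneg c), Real.sqrt_sq_eq_abs]

lemma enorm2_pos {d : ℕ} (x : Fin d → ℝ) (hx : x ≠ 0) : 0 < enorm2 x := by
  apply Real.sqrt_pos.mpr
  obtain ⟨i, hi⟩ : ∃ i, x i ≠ 0 := by
    by_contra h
    push_neg at h
    exact hx (funext h)
  have : 0 < x i ^ 2 := pow_pos (abs_pos.mpr hi) 2 |>.trans_le (by rw [sq_abs])
  calc (0:ℝ) < x i ^ 2 := this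
    _ ≤ ∑ j, x j ^ 2 :=
      Finset.single_le_sum (fun j _ => sq_nonneg (x j)) (Finset.mem_univ i)

lemma enorm2_le_sqrt_mul_norm {d : ℕ} (z : Fin d → ℝ) :
    enorm2 z ≤ Real.sqrt d * ‖z‖ := by
  have h1 : ∑ i, z i ^ 2 ≤ d * ‖z‖ ^ 2 := by
    calc ∑ i, z i ^ 2 ≤ ∑ _i : Fin d, ‖z‖ ^ 2 := by
          apply Finset.sum_le_sum
          intro i _
          have := norm_le_pi_norm z i
          have hz : |z i| ≤ ‖z‖ := this
          nlinarith [abs_nonneg (z i), sq_abs (z i)]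
      _ = d * ‖z‖ ^ 2 := by simp [Finset.sum_const]
  calc enorm2 z ≤ Real.sqrt (d * ‖z‖ ^ 2) := Real.sqrt_le_sqrt h1
    _ = Real.sqrt d * ‖z‖ := by
        rw [Real.sqrt_mul (by positivity), Real.sqrt_sq (norm_nonneg z)]

/-- Concentration of a norm around its median on the sphere: if `μ` is the Haar
(rotation-invariant) probability measure on the unit sphere `S^{d-1}`, `M` the median
of `l` and `b` its maximum on the sphere, then
`Pr[ |l(x) − M| > 2b/√d ] < 1/3`.  Lévy's isoperimetric inequality is assumed. -/
theorem stmt1 {d : ℕ} (hd : 0 < d) (l : (Fin d → ℝ) → ℝ) (hl : IsSymmetricNorm l)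
    (μ : Measure (Fin d → ℝ)) [IsProbabilityMeasure μ]
    (hsupp : μ {x | enorm2 x = 1} = 1)
    (hinv : ∀ T ∈ Matrix.orthogonalGroup (Fin d) ℝ, μ.map T.mulVec = μ)
    (M b : ℝ)
    (hM1 : (1 : ℝ≥0∞) / 2 ≤ μ {x | M ≤ l x})
    (hM2 : (1 : ℝ≥0∞) / 2 ≤ μ {x | l x ≤ M})
    (hb : ∀ x, enorm2 x = 1 → l x ≤ b)
    (hbmax : ∃ x, enorm2 x = 1 ∧ l x = b)
    (hLevy : ∀ f : (Fin d → ℝ) → ℝ, Continuous f → ∀ Mf : ℝ,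
      (1 : ℝ≥0∞) / 2 ≤ μ {x | Mf ≤ f x} → (1 : ℝ≥0∞) / 2 ≤ μ {x | f x ≤ Mf} →
      ∀ ε : ℝ, 0 < ε →
        ENNReal.ofReal (1 - Real.sqrt (Real.pi / 2) * Real.exp (-(ε ^ 2) * d / 2)) ≤
          μ {x | ∃ y, enorm2 y = 1 ∧ f y = Mf ∧ enorm2 (x - y) ≤ ε}) :
    μ {x | 2 * b / Real.sqrt d < |l x - M|} < 1 / 3 := by
  obtain ⟨htri, hsmul, hpos, hperm, habs⟩ := hl
  have hd' : (0:ℝ) < d := Nat.cast_pos.mpr hd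
  have hsd : (0:ℝ) < Real.sqrt d := Real.sqrt_pos.mpr hd'
  have hl0 : l 0 = 0 := by
    have := hsmul 0 0
    simpa using this
  -- l x ≤ b * enorm2 x
  have hb' : ∀ x, l x ≤ b * enorm2 x := by
    intro x
    by_cases hx : x = 0
    · simp [hx, hl0, enorm2]
    · have hr : 0 < enorm2 x := enorm2_pos x hx
      set r := enorm2 x with hrdef
      have hu : enorm2 (r⁻¹ • x) = 1 := by
        rw [enorm2_smul, abs_of_pos (inv_pos.mpr hr), inv_mul_cancel₀ hr.ne']
      have hxr : x = r • (r⁻¹ • x) := by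
        rw [smul_smul, mul_inv_cancel₀ hr.ne', one_smul]
      calc l x = l (r • (r⁻¹ • x)) := by rw [← hxr]
        _ = |r| * l (r⁻¹ • x) := hsmul r _
        _ = r * l (r⁻¹ • x) := by rw [abs_of_pos hr]
        _ ≤ r * b := by
            have := hb _ hu
            nlinarith
        _ = b * r := mul_comm r b
  have hlneg : ∀ x, l (-x) = l x := by
    intro x
    have := hsmul (-1) x
    simpa using this
  have hlip : ∀ x y, |l x - l y| ≤ b * enorm2 (x - y) := by
    intro x y
    rw [abs_sub_le_iff]
    constructor
    · have h1 : l x ≤ l (x - y) + l y := by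
        have := htri (x - y) y
        simpa using this
      have := hb' (x - y)
      linarith
    · have h1 : l y ≤ l (y - x) + l x := by
        have := htri (y - x) x
        simpa using this
      have h2 : l (y - x) = l (x - y) := by
        rw [← hlneg (x - y)]
        congr 1
        abel
      have := hb' (x - y)
      linarith
  have hb0 : 0 < b := by
    obtain ⟨x, hx1, hx2⟩ := hbmax
    have hxne : x ≠ 0 := by
      intro h
      rw [h] at hx1
      simp [enorm2] at hx1
    rw [← hx2]; exact hpos x hxne
  have hcont : Continuous l := by
    apply LipschitzWith.continuous (K := (b * Real.sqrt d).toNNReal)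
    apply LipschitzWith.of_dist_le_mul
    intro x y
    rw [Real.dist_eq, dist_eq_norm]
    calc |l x - l y| ≤ b * enorm2 (x - y) := hlip x y
      _ ≤ b * (Real.sqrt d * ‖x - y‖) := by
          have := enorm2_le_sqrt_mul_norm (x - y)
          nlinarith
      _ = (b * Real.sqrt d).toNNReal * ‖x - y‖ := by
          rw [Real.coe_toNNReal _ (by positivity)]
          ring
  set ε : ℝ := 2 / Real.sqrt d with hεdef
  have hε : 0 < ε := by positivity
  have hLevy' := hLevy l hcont M hM1 hM2 ε hε
  have hexp : -(ε ^ 2) * (d:ℝ) / 2 = -2 := by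
    have h2 : ε ^ 2 = 4 / d := by
      rw [hεdef, div_pow, Real.sq_sqrt hd'.le]
      norm_num
    rw [h2]
    field_simp
    ring
  rw [hexp] at hLevy'
  set c : ℝ := Real.sqrt (Real.pi / 2) * Real.exp (-2) with hcdef
  have hc0 : 0 ≤ c := by positivity
  have hclt : c < 1 / 3 := by
    have h1 : Real.sqrt (Real.pi / 2) < 1.3 := by
      rw [Real.sqrt_lt' (by norm_num)]
      nlinarith [Real.pi_lt_d2]
    have h2 : Real.exp (-2) < 1 / 7 := by
      rw [Real.exp_neg]
      rw [inv_lt_comm₀ (Real.exp_pos 2) (by norm_num)]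
      have : Real.exp 2 = Real.exp 1 * Real.exp 1 := by
        rw [← Real.exp_add]; norm_num
      nlinarith [Real.exp_one_gt_d9]
    have hs0 : 0 ≤ Real.sqrt (Real.pi / 2) := Real.sqrt_nonneg _
    have he0 : 0 < Real.exp (-2) := Real.exp_pos _
    nlinarith
  set A : Set (Fin d → ℝ) := {x | ∃ y, enorm2 y = 1 ∧ l y = M ∧ enorm2 (x - y) ≤ ε}
  set T : Set (Fin d → ℝ) := {x | 2 * b / Real.sqrt d < |l x - M|}
  have hTmeas : MeasurableSet T := by
    have : IsOpen T := by
      have : T = (fun x => |l x - M|) ⁻¹' Set.Ioi (2 * b / Real.sqrt d) := rfl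
      rw [this]
      exact isOpen_Ioi.preimage ((hcont.sub continuous_const).abs)
    exact this.measurableSet
  have hdisj : Disjoint A T := by
    rw [Set.disjoint_left]
    rintro x ⟨y, hy1, hy2, hy3⟩ hxT
    have h1 : |l x - M| ≤ b * ε := by
      rw [← hy2]
      calc |l x - l y| ≤ b * enorm2 (x - y) := hlip x y
        _ ≤ b * ε := by nlinarith
    have h2 : b * ε = 2 * b / Real.sqrt d := by
      rw [hεdef]; ring
    have hxT' : 2 * b / Real.sqrt d < |l x - M| := hxT
    rw [h2] at h1
    linarith
  have hsum : μ A + μ T ≤ 1 := by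
    rw [← measure_union hdisj hTmeas]
    exact (measure_mono (Set.subset_univ _)).trans_eq measure_univ
  have hT1 : μ T ≤ 1 - μ A := ENNReal.le_sub_of_add_le_left (measure_ne_top μ A) hsum
  have hT2 : μ T ≤ ENNReal.ofReal c := by
    calc μ T ≤ 1 - μ A := hT1
      _ ≤ 1 - ENNReal.ofReal (1 - c) := tsub_le_tsub_left hLevy' 1
      _ = ENNReal.ofReal c := by
          rw [← ENNReal.ofReal_one, ← ENNReal.ofReal_sub 1 (show (0:ℝ) ≤ 1 - c by linarith)]
          norm_num
  calc μ T ≤ ENNReal.ofReal c := hT2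
    _ < ENNReal.ofReal (1/3) := (ENNReal.ofReal_lt_ofReal_iff (by norm_num)).mpr hclt
    _ = 1 / 3 := by
        rw [ENNReal.ofReal_div_of_pos (by norm_num), ENNReal.ofReal_one]
        norm_num
end

section
/- Let l be a symmetric norm on ℝ^d, v ∈ ℝ^d with layer sizes (b_k)_{k∈[P]} and layer vector L(v), and fix a layer index i with approximate count c_i. If c_i ≤ b_i, then l((L(v) \ L_i(v)) ∪ J_i(v)) ≤ l(L(v)); and if c_i ≥ (1−ε)b_i, then l((L(v) \ L_i(v)) ∪ J_i(v)) ≥ (1−ε)·l(L(v)). -/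
/-- `w ∈ ℝ^d` is a layer vector with counts `b` (for base `α` and layers `1..P`):
for each layer `k ∈ [P]` it has exactly `b k` coordinates equal to `α^k`, and every
coordinate is either `0` or of the form `α^k` for some `k ∈ [P]`. -/
def IsLayerVec {d : ℕ} (α : ℝ) (P : ℕ) (b : ℕ → ℕ) (w : Fin d → ℝ) : Prop :=
  (∀ k ∈ Finset.Icc 1 P, (Finset.univ.filter fun j => w j = α ^ k).card = b k) ∧
  (∀ j, w j = 0 ∨ ∃ k ∈ Finset.Icc 1 P, w j = α ^ k)

section Aux
variable {d : ℕ} {l : (Fin d → ℝ) → ℝ}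

lemma sn_zero (hl : IsSymmetricNorm l) : l 0 = 0 := by
  have h := hl.2.1 0 0
  simpa using h

lemma sn_nonneg (hl : IsSymmetricNorm l) (x : Fin d → ℝ) : 0 ≤ l x := by
  have h1 : l ((-1:ℝ) • x) = l x := by rw [hl.2.1]; simp
  have h2 := hl.1 x ((-1:ℝ) • x)
  have h3 : x + (-1:ℝ) • x = 0 := by
    funext j; simp
  rw [h3, sn_zero hl] at h2
  linarith

lemma sn_perm (hl : IsSymmetricNorm l) (σ : Equiv.Perm (Fin d)) (x : Fin d → ℝ) :
    l (x ∘ σ) = l x := hl.2.2.2.1 σ x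

lemma sn_flip (hl : IsSymmetricNorm l) (s x : Fin d → ℝ) (hs : ∀ j, |s j| = 1) :
    l (fun j => s j * x j) = l x := by
  rw [← hl.2.2.2.2 x, ← hl.2.2.2.2 (fun j => s j * x j)]
  congr 1
  funext j
  rw [abs_mul, hs j, one_mul]

lemma sn_step (hl : IsSymmetricNorm l) (z : Fin d → ℝ) (a : Fin d) (c : ℝ) (hc : |c| ≤ 1) :
    l (Function.update z a (c * z a)) ≤ l z := by
  set s : Fin d → ℝ := fun j => if j = a then -1 else 1 with hs
  have hflip : l (fun j => s j * z j) = l z := by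
    apply sn_flip hl
    intro j; simp only [hs]; split <;> simp
  have hdec : Function.update z a (c * z a)
      = ((1+c)/2) • z + ((1-c)/2) • (fun j => s j * z j) := by
    funext j
    by_cases h : j = a
    · subst h; simp [Function.update_self, hs]; ring
    · simp [Function.update_of_ne h, hs, h]; ring
  have h1 : (0:ℝ) ≤ (1+c)/2 := by cases abs_le.mp hc; linarith
  have h2 : (0:ℝ) ≤ (1-c)/2 := by cases abs_le.mp hc; linarith
  calc l (Function.update z a (c * z a))
      ≤ l (((1+c)/2) • z) + l (((1-c)/2) • (fun j => s j * z j)) := by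
        rw [hdec]; exact hl.1 _ _
    _ = ((1+c)/2) * l z + ((1-c)/2) * l z := by
        rw [hl.2.1, hl.2.1, hflip, abs_of_nonneg h1, abs_of_nonneg h2]
    _ = l z := by ring

lemma sn_mono (hl : IsSymmetricNorm l) {x y : Fin d → ℝ}
    (hx : ∀ j, 0 ≤ x j) (hxy : ∀ j, x j ≤ y j) : l x ≤ l y := by
  have key : ∀ s : Finset (Fin d), l (fun j => if j ∈ s then x j else y j) ≤ l y := by
    intro s
    induction s using Finset.induction_on with
    | empty => simp
    | @insert a s ha IH =>
      set z : Fin d → ℝ := fun j => if j ∈ s then x j else y j with hz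
      have hya : 0 ≤ y a := le_trans (hx a) (hxy a)
      have hza : z a = y a := by simp [hz, ha]
      set c : ℝ := if y a = 0 then 0 else x a / y a with hc
      have hc1 : |c| ≤ 1 := by
        rw [hc]; split
        · simp
        · rename_i h
          have hpos : 0 < y a := lt_of_le_of_ne hya (Ne.symm h)
          rw [abs_of_nonneg (div_nonneg (hx a) hya)]
          exact (div_le_one hpos).mpr (hxy a)
      have hxa : x a = c * z a := by
        rw [hza, hc]; split
        · rename_i h
          have : x a = 0 := le_antisymm (h ▸ hxy a) (hx a)
          simp [this]
        · rw [div_mul_cancel₀]; assumption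
      have heq : (fun j => if j ∈ insert a s then x j else y j)
          = Function.update z a (c * z a) := by
        funext j
        by_cases h : j = a
        · subst h; rw [Function.update_self, ← hxa]; simp
        · rw [Function.update_of_ne h]; simp [hz, h]
      rw [heq]
      exact le_trans (sn_step hl z a c hc1) IH
  have := key Finset.univ
  simpa using this

lemma sn_sum (hl : IsSymmetricNorm l) {ι : Type*} (s : Finset ι) (f : ι → Fin d → ℝ) :
    l (∑ r ∈ s, f r) ≤ ∑ r ∈ s, l (f r) := by
  induction s using Finset.cons_induction with
  | empty => simp [sn_zero hl]
  | cons a s ha IH =>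
    rw [Finset.sum_cons, Finset.sum_cons]
    exact le_trans (hl.1 _ _) (by linarith)

lemma count_univ_eq {x : Fin d → ℝ} (t : ℝ) :
    Multiset.count t (Multiset.map x Finset.univ.val)
      = (Finset.univ.filter fun j => x j = t).card := by
  rw [Multiset.count_map]
  have h : Multiset.filter (fun a => t = x a) Finset.univ.val
      = Multiset.filter (fun a => x a = t) Finset.univ.val :=
    Multiset.filter_congr (fun a _ => ⟨Eq.symm, Eq.symm⟩)
  rw [h]
  rfl

lemma exists_comp_perm_of_count {x y : Fin d → ℝ}
    (h : ∀ t : ℝ, (Finset.univ.filter fun j => x j = t).card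
        = (Finset.univ.filter fun j => y j = t).card) :
    ∃ σ : Equiv.Perm (Fin d), x = y ∘ σ := by
  have hm : ((List.ofFn x : List ℝ) : Multiset ℝ) = (List.ofFn y : List ℝ) := by
    rw [← Fin.univ_val_map, ← Fin.univ_val_map]
    ext t
    rw [count_univ_eq, count_univ_eq]
    exact h t
  have hp : (List.ofFn x).Perm (List.ofFn y) := Multiset.coe_eq_coe.mp hm
  set σx := Tuple.sort x
  set σy := Tuple.sort y
  have h1 : List.ofFn (x ∘ σx) = List.ofFn (y ∘ σy) :=
    List.Perm.eq_of_sortedLE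
      (List.sortedLE_ofFn_iff.mpr (Tuple.monotone_sort x))
      (List.sortedLE_ofFn_iff.mpr (Tuple.monotone_sort y))
      ((σx.ofFn_comp_perm x).trans (hp.trans (σy.ofFn_comp_perm y).symm))
  have h2 : x ∘ σx = y ∘ σy := List.ofFn_inj.mp h1
  refine ⟨σx.symm.trans σy, ?_⟩
  funext j
  have := congrFun h2 (σx.symm j)
  simpa using this

end Aux

section Layer
variable {d : ℕ} {α : ℝ} {P : ℕ} {b : ℕ → ℕ}

lemma pow_inj_of_one_lt (hα : 1 < α) : Function.Injective fun k : ℕ => α ^ k :=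
  pow_right_injective₀ (by linarith) hα.ne'

lemma layer_nonneg (hα : 1 < α) {x : Fin d → ℝ} (hx : IsLayerVec α P b x) (j : Fin d) :
    0 ≤ x j := by
  rcases hx.2 j with h | ⟨k, _, h⟩
  · rw [h]
  · rw [h]; positivity

lemma layer_zero_count (hα : 1 < α) {x : Fin d → ℝ} (hx : IsLayerVec α P b x) :
    (Finset.univ.filter fun j => x j = 0).card + ∑ k ∈ Finset.Icc 1 P, b k = d := by
  have hα0 : (0:ℝ) < α := lt_trans zero_lt_one hα
  have hd : (Finset.univ.filter fun j => x j = 0).card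
      + (Finset.univ.filter fun j => ¬ (x j = 0)).card = d := by
    rw [Finset.card_filter_add_card_filter_not]; simp
  have hne : (Finset.univ.filter fun j => ¬ (x j = 0))
      = (Finset.Icc 1 P).biUnion (fun k => Finset.univ.filter fun j => x j = α ^ k) := by
    ext j
    simp only [Finset.mem_filter, Finset.mem_biUnion, Finset.mem_univ, true_and]
    constructor
    · intro hj
      rcases hx.2 j with h | ⟨k, hk, h⟩
      · exact absurd h hj
      · exact ⟨k, hk, h⟩
    · rintro ⟨k, _, h⟩
      rw [h]
      exact pow_ne_zero k (ne_of_gt hα0)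
  have hcard : ((Finset.Icc 1 P).biUnion
        (fun k => Finset.univ.filter fun j => x j = α ^ k)).card
      = ∑ k ∈ Finset.Icc 1 P, b k := by
    rw [Finset.card_biUnion]
    · exact Finset.sum_congr rfl fun k hk => hx.1 k hk
    · intro k _ k' _ hkk'
      rw [Function.onFun, Finset.disjoint_left]
      intro j hj hj'
      simp only [Finset.mem_filter] at hj hj'
      exact hkk' (pow_inj_of_one_lt hα (hj.2.symm.trans hj'.2))
  rw [hne, hcard] at hd
  exact hd

lemma layer_counts_eq (hα : 1 < α) {x y : Fin d → ℝ}
    (hx : IsLayerVec α P b x) (hy : IsLayerVec α P b y) (t : ℝ) :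
    (Finset.univ.filter fun j => x j = t).card
      = (Finset.univ.filter fun j => y j = t).card := by
  by_cases h0 : t = 0
  · subst h0
    have h1 := layer_zero_count hα hx
    have h2 := layer_zero_count hα hy
    omega
  by_cases hk : ∃ k ∈ Finset.Icc 1 P, t = α ^ k
  · obtain ⟨k, hkm, rfl⟩ := hk
    rw [hx.1 k hkm, hy.1 k hkm]
  · have he : ∀ z : Fin d → ℝ, IsLayerVec α P b z →
        (Finset.univ.filter fun j => z j = t) = ∅ := by
      intro z hz
      rw [Finset.filter_eq_empty_iff]
      intro j _ hj
      rcases hz.2 j with h | ⟨k, hkm, h⟩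
      · exact h0 (hj ▸ h)
      · exact hk ⟨k, hkm, hj ▸ h⟩
    rw [he x hx, he y hy]

lemma layer_zeroed (hα : 1 < α) {x : Fin d → ℝ} (hx : IsLayerVec α P b x)
    {i : ℕ} (hi : i ∈ Finset.Icc 1 P) (T : Finset (Fin d))
    (hT : ∀ j ∈ T, x j = α ^ i) :
    IsLayerVec α P (Function.update b i T.card)
      (fun j => if x j = α ^ i ∧ j ∉ T then 0 else x j) := by
  have hα0 : (0:ℝ) < α := lt_trans zero_lt_one hα
  have hpow0 : ∀ k : ℕ, (0:ℝ) ≠ α ^ k := fun k => (pow_ne_zero k (ne_of_gt hα0)).symm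
  constructor
  · intro k hk
    by_cases hki : k = i
    · subst hki
      have hfT : (Finset.univ.filter fun j =>
          (if x j = α ^ k ∧ j ∉ T then 0 else x j) = α ^ k) = T := by
        ext j
        simp only [Finset.mem_filter, Finset.mem_univ, true_and]
        constructor
        · intro hj
          split at hj
          · exact absurd hj (hpow0 k)
          · rename_i h
            push_neg at h
            exact h hj
        · intro hj
          rw [if_neg (by simp [hj]), hT j hj]
      rw [hfT, Function.update_self]
    · have hfk : (Finset.univ.filter fun j =>
          (if x j = α ^ i ∧ j ∉ T then 0 else x j) = α ^ k)
          = (Finset.univ.filter fun j => x j = α ^ k) := by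
        ext j
        simp only [Finset.mem_filter, Finset.mem_univ, true_and]
        constructor
        · intro hj
          split at hj
          · exact absurd hj (hpow0 k)
          · exact hj
        · intro hj
          rw [if_neg]
          · exact hj
          · rintro ⟨h1, -⟩
            exact hki (pow_inj_of_one_lt hα (h1.symm.trans hj)).symm
      rw [hfk, hx.1 k hk, Function.update_of_ne hki]
  · intro j
    dsimp only
    by_cases h : x j = α ^ i ∧ j ∉ T
    · rw [if_pos h]
      exact Or.inl rfl
    · rw [if_neg h]
      exact hx.2 j

lemma fin_filter_lt_card (n c : ℕ) (h : c ≤ n) :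
    ((Finset.univ : Finset (Fin n)).filter fun m : Fin n => (m : ℕ) < c).card = c := by
  rcases eq_or_lt_of_le h with rfl | hlt
  · have he : ((Finset.univ : Finset (Fin c)).filter fun m : Fin c => (m : ℕ) < c)
        = Finset.univ := by
      ext m; simp [m.2]
    rw [he, Finset.card_univ, Fintype.card_fin]
  · have he : ((Finset.univ : Finset (Fin n)).filter fun m : Fin n => (m : ℕ) < c)
        = Finset.Iio ⟨c, hlt⟩ := by
      ext m; simp [Finset.mem_Iio, Fin.lt_def]
    rw [he, Fin.card_Iio]

lemma fin_filter_add_lt_card {n : ℕ} [NeZero n] (r : Fin n) (c : ℕ) (h : c ≤ n) :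
    ((Finset.univ : Finset (Fin n)).filter
      fun m : Fin n => ((m + r : Fin n) : ℕ) < c).card = c := by
  have key : ((Finset.univ : Finset (Fin n)).filter
        fun m : Fin n => ((m + r : Fin n) : ℕ) < c).card
      = ((Finset.univ : Finset (Fin n)).filter fun m : Fin n => (m : ℕ) < c).card := by
    apply Finset.card_bij' (i := fun m _ => m + r) (j := fun m _ => m - r)
    · intro m hm
      simp only [Finset.mem_filter, Finset.mem_univ, true_and] at hm ⊢
      exact hm
    · intro m hm
      simp only [Finset.mem_filter, Finset.mem_univ, true_and] at hm ⊢
      rw [sub_add_cancel]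
      exact hm
    · intro m _
      exact add_sub_cancel_right m r
    · intro m _
      exact sub_add_cancel m r
  rw [key, fin_filter_lt_card n c h]

end Layer

/-- Bucket approximation: replacing the `b i` copies of `α^i` in the layer vector `L(v)`
by `c i` copies (giving `(L(v) \ L_i(v)) ∪ J_i(v)`, here `W`) can only decrease the norm
if `c i ≤ b i`, and loses at most a `(1-ε)` factor if `c i ≥ (1-ε)·b i`. -/
theorem stmt6 {d : ℕ} (l : (Fin d → ℝ) → ℝ) (hl : IsSymmetricNorm l)
    (α ε : ℝ) (hα : 1 < α) (hε0 : 0 ≤ ε) (hε1 : ε < 1)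
    (P i : ℕ) (hi : i ∈ Finset.Icc 1 P) (b : ℕ → ℕ) (ci : ℕ)
    (LV W : Fin d → ℝ)
    (hLV : IsLayerVec α P b LV)
    (hW : IsLayerVec α P (Function.update b i ci) W) :
    (ci ≤ b i → l W ≤ l LV) ∧
    ((1 - ε) * (b i : ℝ) ≤ (ci : ℝ) → (1 - ε) * l LV ≤ l W) := by
  have hα0 : (0:ℝ) < α := lt_trans zero_lt_one hα
  have hpow_pos : (0:ℝ) < α ^ i := pow_pos hα0 i
  have hε' : (0:ℝ) ≤ 1 - ε := by linarith
  constructor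
  · -- Part 1
    intro hci
    obtain ⟨T, hTsub, hTcard⟩ := Finset.exists_subset_card_eq
      (s := Finset.univ.filter fun j => LV j = α ^ i) (n := ci) (by rw [hLV.1 i hi]; exact hci)
    have hyl : IsLayerVec α P (Function.update b i ci)
        (fun j => if LV j = α ^ i ∧ j ∉ T then 0 else LV j) := by
      have h := layer_zeroed hα hLV hi T (fun j hj => (Finset.mem_filter.mp (hTsub hj)).2)
      rwa [hTcard] at h
    obtain ⟨σ, hσ⟩ := exists_comp_perm_of_count
      (fun t => layer_counts_eq hα hW hyl t)
    rw [hσ, sn_perm hl]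
    apply sn_mono hl (layer_nonneg hα hyl)
    intro j
    split
    · exact layer_nonneg hα hLV j
    · exact le_refl _
  · -- Part 2
    intro hci
    by_cases hbc : b i ≤ ci
    · -- trivial case : W dominates a copy of LV
      obtain ⟨T, hTsub, hTcard⟩ := Finset.exists_subset_card_eq
        (s := Finset.univ.filter fun j => W j = α ^ i) (n := b i)
        (by rw [hW.1 i hi, Function.update_self]; exact hbc)
      have hyl : IsLayerVec α P (Function.update (Function.update b i ci) i (b i))
          (fun j => if W j = α ^ i ∧ j ∉ T then 0 else W j) := by
        have h := layer_zeroed hα hW hi T (fun j hj => (Finset.mem_filter.mp (hTsub hj)).2)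
        rwa [hTcard] at h
      rw [Function.update_idem, Function.update_eq_self] at hyl
      obtain ⟨σ, hσ⟩ := exists_comp_perm_of_count
        (fun t => layer_counts_eq hα hLV hyl t)
      have hLVy : l LV ≤ l W := by
        rw [hσ, sn_perm hl]
        apply sn_mono hl (layer_nonneg hα hyl)
        intro j
        split
        · exact layer_nonneg hα hW j
        · exact le_refl _
      have h0 : 0 ≤ l LV := sn_nonneg hl LV
      nlinarith
    · push_neg at hbc
      have hbpos : 0 < b i := lt_of_le_of_lt (Nat.zero_le ci) hbc
      haveI : NeZero (b i) := ⟨hbpos.ne'⟩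
      have hScard : (Finset.univ.filter fun j => LV j = α ^ i).card = b i := hLV.1 i hi
      set E := (Finset.equivFinOfCardEq hScard).symm with hE
      have hEinj : Function.Injective fun m : Fin (b i) => (E m : Fin d) :=
        fun m m' h => E.injective (Subtype.ext h)
      set T : Fin (b i) → Finset (Fin d) := fun r =>
        (Finset.univ.filter fun m : Fin (b i) => ((m + r : Fin (b i)) : ℕ) < ci).image
          (fun m => (E m : Fin d)) with hT
      have hTsub : ∀ r, T r ⊆ (Finset.univ.filter fun j => LV j = α ^ i) := by
        intro r j hj
        simp only [hT, Finset.mem_image] at hj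
        obtain ⟨m, -, rfl⟩ := hj
        exact (E m).2
      have hTcard : ∀ r, (T r).card = ci := by
        intro r
        rw [hT]
        rw [Finset.card_image_of_injective _ hEinj, fin_filter_add_lt_card r ci (le_of_lt hbc)]
      have hyl : ∀ r, IsLayerVec α P (Function.update b i ci)
          (fun j => if LV j = α ^ i ∧ j ∉ T r then 0 else LV j) := by
        intro r
        have h := layer_zeroed hα hLV hi (T r)
          (fun j hj => (Finset.mem_filter.mp (hTsub r hj)).2)
        rwa [hTcard r] at h
      have hyW : ∀ r : Fin (b i),
          l (fun j => if LV j = α ^ i ∧ j ∉ T r then 0 else LV j) = l W := by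
        intro r
        obtain ⟨σ, hσ⟩ := exists_comp_perm_of_count
          (fun t => layer_counts_eq hα (hyl r) hW t)
        rw [hσ, sn_perm hl]
      have hmemT : ∀ (r : Fin (b i)) (j : Fin d)
          (hj : j ∈ Finset.univ.filter fun j => LV j = α ^ i),
          (j ∈ T r ↔ ((E.symm ⟨j, hj⟩ + r : Fin (b i)) : ℕ) < ci) := by
        intro r j hj
        simp only [hT, Finset.mem_image, Finset.mem_filter, Finset.mem_univ, true_and]
        constructor
        · rintro ⟨m, hm, hmj⟩
          have hm' : m = E.symm ⟨j, hj⟩ := by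
            apply E.injective
            rw [Equiv.apply_symm_apply]
            exact Subtype.ext hmj
          rwa [← hm']
        · intro h
          exact ⟨E.symm ⟨j, hj⟩, h, by simp⟩
      have hsum : ∀ j, ((1 - ε) * (b i : ℝ)) * LV j
          ≤ ∑ r : Fin (b i), (fun j => if LV j = α ^ i ∧ j ∉ T r then 0 else LV j) j := by
        intro j
        by_cases hj : j ∈ Finset.univ.filter fun j => LV j = α ^ i
        · have hLVj : LV j = α ^ i := (Finset.mem_filter.mp hj).2
          have heq : ∀ r : Fin (b i),
              (fun j => if LV j = α ^ i ∧ j ∉ T r then 0 else LV j) j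
              = if ((E.symm ⟨j, hj⟩ + r : Fin (b i)) : ℕ) < ci then α ^ i else 0 := by
            intro r
            dsimp only
            by_cases hc : ((E.symm ⟨j, hj⟩ + r : Fin (b i)) : ℕ) < ci
            · rw [if_pos hc, if_neg, hLVj]
              rintro ⟨-, hnT⟩
              exact hnT ((hmemT r j hj).mpr hc)
            · rw [if_neg hc, if_pos ⟨hLVj, fun hT' => hc ((hmemT r j hj).mp hT')⟩]
          rw [Finset.sum_congr rfl (fun r _ => heq r)]
          have hcnt : (Finset.univ.filter
              fun r : Fin (b i) => ((E.symm ⟨j, hj⟩ + r : Fin (b i)) : ℕ) < ci).card = ci := by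
            have hpred : (Finset.univ.filter
                  fun r : Fin (b i) => ((E.symm ⟨j, hj⟩ + r : Fin (b i)) : ℕ) < ci)
                = (Finset.univ.filter
                  fun r : Fin (b i) => ((r + E.symm ⟨j, hj⟩ : Fin (b i)) : ℕ) < ci) :=
              Finset.filter_congr (fun r _ => by rw [add_comm])
            rw [hpred]
            exact fin_filter_add_lt_card (E.symm ⟨j, hj⟩) ci (le_of_lt hbc)
          rw [Finset.sum_ite, Finset.sum_const, Finset.sum_const_zero, add_zero, hcnt,
            nsmul_eq_mul, hLVj]
          have := mul_le_mul_of_nonneg_right hci (le_of_lt hpow_pos)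
          linarith
        · have hLVj : ¬ (LV j = α ^ i) := fun h =>
            hj (Finset.mem_filter.mpr ⟨Finset.mem_univ j, h⟩)
          have heq : ∀ r : Fin (b i),
              (fun j => if LV j = α ^ i ∧ j ∉ T r then 0 else LV j) j = LV j := by
            intro r
            dsimp only
            rw [if_neg (fun h => hLVj h.1)]
          rw [Finset.sum_congr rfl (fun r _ => heq r), Finset.sum_const, Finset.card_univ,
            Fintype.card_fin, nsmul_eq_mul]
          have h0 : 0 ≤ LV j := layer_nonneg hα hLV j
          nlinarith [mul_nonneg (mul_nonneg hε0 (Nat.cast_nonneg (b i))) h0]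
      have hmain : ((1 - ε) * (b i : ℝ)) * l LV ≤ (b i : ℝ) * l W := by
        calc ((1 - ε) * (b i : ℝ)) * l LV
            = l (((1 - ε) * (b i : ℝ)) • LV) := by
              rw [hl.2.1, abs_of_nonneg (mul_nonneg hε' (Nat.cast_nonneg _))]
          _ ≤ l (∑ r : Fin (b i), fun j => if LV j = α ^ i ∧ j ∉ T r then 0 else LV j) := by
              apply sn_mono hl
              · intro j
                exact mul_nonneg (mul_nonneg hε' (Nat.cast_nonneg _)) (layer_nonneg hα hLV j)
              · intro j
                have h := hsum j
                rw [Finset.sum_apply]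
                simpa using h
          _ ≤ ∑ r : Fin (b i), l (fun j => if LV j = α ^ i ∧ j ∉ T r then 0 else LV j) :=
              sn_sum hl _ _
          _ = (b i : ℝ) * l W := by
              rw [Finset.sum_congr rfl (fun r _ => hyW r), Finset.sum_const, Finset.card_univ,
                Fintype.card_fin, nsmul_eq_mul]
      have hb' : (0:ℝ) < (b i : ℝ) := by exact_mod_cast hbpos
      rw [show ((1 - ε) * (b i : ℝ)) * l LV = (b i : ℝ) * ((1 - ε) * l LV) by ring] at hmain
      exact le_of_mul_le_mul_left hmain hb'
end
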